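/- Let K ≥ 1 be an integer and η > 0, τ > 0 reals, and let μ_T : {1,…,K} → ℝ satisfy μ_T(t) ≥ 0 for all t. Define μ_e(l) = η·∑_{t=l+1}^{K} τ^{t−l−1}·μ_T(t) for l ∈ {0,…,K−1}. Then for all indices 0 ≤ l ≤ k ≤ K−1 one has μ_e(l) ≥ τ^{k−l}·μ_e(k); in particular, if μ_e(k) > 0 then μ_e(l) > 0 for every l with 0 ≤ l ≤ k. -/

import Mathlib

/-! Scaling `μe k` by `τ^(k-l)` gives its terms exactly the weights they carry in `μe l`,
so `μe l` exceeds it by the nonnegative terms with `l < t ≤ k`. -/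

open Finset

def discountedTail {R : Type*} [CommSemiring R] (τ : R) (f : ℕ → R) (K l : ℕ) : R :=
  ∑ t ∈ Icc (l + 1) K, τ ^ (t - l - 1) * f t

section

variable {R : Type*} [CommSemiring R] (τ : R) (f : ℕ → R) (K : ℕ) {l k : ℕ}

theorem pow_mul_discountedTail (hlk : l ≤ k) :
    τ ^ (k - l) * discountedTail τ f K k = ∑ t ∈ Icc (k + 1) K, τ ^ (t - l - 1) * f t := by
  rw [discountedTail, mul_sum]
  refine sum_congr rfl fun t ht => ?_
  rw [mem_Icc] at ht
  rw [← mul_assoc, ← pow_add]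
  congr 2
  omega

variable [PartialOrder R] [IsOrderedRing R] {τ f K}

theorem pow_mul_discountedTail_le (hτ : 0 ≤ τ) (hf : ∀ t, l < t → t ≤ K → 0 ≤ f t)
    (hlk : l ≤ k) : τ ^ (k - l) * discountedTail τ f K k ≤ discountedTail τ f K l := by
  rw [pow_mul_discountedTail τ f K hlk]
  refine sum_le_sum_of_subset_of_nonneg (Icc_subset_Icc (by omega) le_rfl) fun t ht _ => ?_
  rw [mem_Icc] at ht
  exact mul_nonneg (pow_nonneg hτ _) (hf t (by omega) ht.2)

end

theorem relaxation_multiplier_backward_propagation_general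
    (K : ℕ) (η τ : ℝ) (hη : 0 < η) (hτ : 0 < τ)
    (μT : ℕ → ℝ) (hμT : ∀ t, 1 ≤ t → t ≤ K → 0 ≤ μT t)
    (μe : ℕ → ℝ)
    (hμe : ∀ l, l ≤ K - 1 →
      μe l = η * ∑ t ∈ Finset.Icc (l + 1) K, τ ^ (t - l - 1) * μT t) :
    ∀ l k, l ≤ k → k ≤ K - 1 →
      τ ^ (k - l) * μe k ≤ μe l ∧ (0 < μe k → 0 < μe l) := by
  intro l k hlk hkK
  have key : τ ^ (k - l) * μe k ≤ μe l := by
    rw [hμe l (hlk.trans hkK), hμe k hkK, mul_left_comm]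
    exact mul_le_mul_of_nonneg_left
      (pow_mul_discountedTail_le hτ.le (fun t hlt => hμT t (by omega)) hlk) hη.le
  exact ⟨key, fun hk => (mul_pos (pow_pos hτ _) hk).trans_le key⟩

/-- Second part of Lemma 1: the multiplier `μe` of the relaxed quadratic
constraint satisfies `μe l ≥ τ^{k−l}·μe k` for all `0 ≤ l ≤ k ≤ K−1`; in
particular strict activity propagates backward in time: if `μe k > 0` then
`μe l > 0` for every `l ≤ k`. -/
theorem relaxation_multiplier_backward_propagation
    (K : ℕ) (hK : 1 ≤ K) (η τ : ℝ) (hη : 0 < η) (hτ : 0 < τ)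
    (μT : ℕ → ℝ) (hμT : ∀ t, 1 ≤ t → t ≤ K → 0 ≤ μT t)
    (μe : ℕ → ℝ)
    (hμe : ∀ l, l ≤ K - 1 →
      μe l = η * ∑ t ∈ Finset.Icc (l + 1) K, τ ^ (t - l - 1) * μT t) :
    ∀ l k, l ≤ k → k ≤ K - 1 →
      τ ^ (k - l) * μe k ≤ μe l ∧ (0 < μe k → 0 < μe l) :=
  relaxation_multiplier_backward_propagation_general K η τ hη hτ μT hμT μe hμe
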